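/- There do not exist natural numbers N and M, output functions F_A : Bool → (Fin N → Bool) → ZMod 3 and F_B : Bool → (Fin M → Bool) → ZMod 3, and a family μ of probability mass functions on (Fin N → Bool) × (Fin M → Bool) indexed by input pairs (x, y) : Bool × Bool, such that for every (x, y) the first marginal of μ (x,y) is the uniform distribution on (Fin N → Bool), the second marginal is the uniform distribution on (Fin M → Bool), and every pair (s, t) in the support of μ (x,y) satisfies F_B y t - F_A x s = (if x = true ∧ y = true then 1 else 0) in ZMod 3. -/

import Mathlib

private lemma pmf_map_congr {α β : Type*} (p : PMF α) {f g : α → β}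
    (h : ∀ a ∈ p.support, f a = g a) : p.map f = p.map g := by
  ext b
  simp only [PMF.map_apply]
  refine tsum_congr fun a => ?_
  by_cases ha : a ∈ p.support
  · rw [h a ha]
  · rw [PMF.mem_support_iff, not_not] at ha
    simp [ha]

private lemma pmf_map_shift (P : PMF (ZMod 3)) (b : ZMod 3) :
    (P.map (fun a => a + 1)) b = P (b - 1) := by
  rw [PMF.map_apply]
  refine (tsum_eq_single (b - 1) fun a ha => if_neg fun hc => ha ?_).trans
    (if_pos (by ring))
  rw [hc]; ring

/-- No finite collection of nonlocal boxes with uniform binary outputs can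
perfectly simulate the mod-3 nonlocal box. -/
theorem no_uniform_binary_boxes_simulate_mod3 :
    ¬ ∃ (N M : ℕ)
        (F_A : Bool → (Fin N → Bool) → ZMod 3)
        (F_B : Bool → (Fin M → Bool) → ZMod 3)
        (μ : Bool × Bool → PMF ((Fin N → Bool) × (Fin M → Bool))),
        ∀ x y : Bool,
          (μ (x, y)).map Prod.fst = PMF.uniformOfFintype (Fin N → Bool) ∧
          (μ (x, y)).map Prod.snd = PMF.uniformOfFintype (Fin M → Bool) ∧
          ∀ st ∈ (μ (x, y)).support,
            F_B y st.2 - F_A x st.1 = (if x = true ∧ y = true then (1 : ZMod 3) else 0) := by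
  rintro ⟨N, M, F_A, F_B, μ, h⟩
  have key : ∀ x y : Bool,
      (PMF.uniformOfFintype (Fin M → Bool)).map (F_B y)
        = (PMF.uniformOfFintype (Fin N → Bool)).map
            (fun s => F_A x s + (if x = true ∧ y = true then (1 : ZMod 3) else 0)) := by
    intro x y
    obtain ⟨h1, h2, h3⟩ := h x y
    calc (PMF.uniformOfFintype (Fin M → Bool)).map (F_B y)
        = ((μ (x, y)).map Prod.snd).map (F_B y) := by rw [h2]
      _ = (μ (x, y)).map (fun st => F_B y st.2) := by rw [PMF.map_comp]; rfl
      _ = (μ (x, y)).map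
            (fun st => F_A x st.1 + (if x = true ∧ y = true then (1 : ZMod 3) else 0)) := by
          refine pmf_map_congr _ fun st hst => ?_
          have := h3 st hst
          linear_combination this
      _ = ((μ (x, y)).map Prod.fst).map
            (fun s => F_A x s + (if x = true ∧ y = true then (1 : ZMod 3) else 0)) := by
          rw [PMF.map_comp]; rfl
      _ = _ := by rw [h1]
  have e00 := key false false
  have e10 := key true false
  have e01 := key false true
  have e11 := key true true
  simp only [Bool.false_eq_true, false_and, and_false, if_false, add_zero, and_self,
    if_true, reduceIte] at e00 e10 e01 e11
  set P : PMF (ZMod 3) :=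
    (PMF.uniformOfFintype (Fin N → Bool)).map (fun s => F_A false s) with hP
  have hA1 : (PMF.uniformOfFintype (Fin N → Bool)).map (fun s => F_A true s) = P :=
    e10.symm.trans e00
  have shift : P.map (fun a => a + 1) = P := by
    calc P.map (fun a => a + 1)
        = ((PMF.uniformOfFintype (Fin N → Bool)).map (fun s => F_A true s)).map
            (fun a => a + 1) := by rw [hA1]
      _ = (PMF.uniformOfFintype (Fin N → Bool)).map (fun s => F_A true s + 1) := by
          rw [PMF.map_comp]; rfl
      _ = (PMF.uniformOfFintype (Fin M → Bool)).map (F_B true) := e11.symm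
      _ = P := e01
  have hconst : ∀ b : ZMod 3, P b = P (b - 1) := fun b => by
    conv_lhs => rw [← shift]
    exact pmf_map_shift P b
  have h02 : P 0 = P 2 := by have := hconst 0; rwa [show (0 : ZMod 3) - 1 = 2 by decide] at this
  have h10 : P 1 = P 0 := by have := hconst 1; simpa using this
  have h21 : P 2 = P 1 := by have := hconst 2; rwa [show (2 : ZMod 3) - 1 = 1 by decide] at this
  have huniv : (Finset.univ : Finset (ZMod 3)) = {0, 1, 2} := by decide
  have hsum : P 0 + (P 1 + P 2) = 1 := by
    have h3 := P.tsum_coe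
    rw [tsum_fintype, huniv, Finset.sum_insert (by decide), Finset.sum_insert (by decide),
      Finset.sum_singleton] at h3
    exact h3
  -- value of P 0
  set n : ℕ := Fintype.card (Fin N → Bool) with hn
  set k : ℕ := (Finset.univ.filter (fun s : Fin N → Bool => (0 : ZMod 3) = F_A false s)).card
    with hk
  have hval : P 0 = (k : ENNReal) * ((n : ENNReal))⁻¹ := by
    rw [hP, PMF.map_apply, tsum_fintype]
    simp only [PMF.uniformOfFintype_apply]
    rw [← Finset.sum_filter, Finset.sum_const, nsmul_eq_mul]
  have h3P : (3 * k : ENNReal) * ((n : ENNReal))⁻¹ = 1 := by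
    have hP1 : P 1 = (k : ENNReal) * ((n : ENNReal))⁻¹ := by rw [h10, hval]
    have hP2 : P 2 = (k : ENNReal) * ((n : ENNReal))⁻¹ := by rw [h21, hP1]
    rw [← hsum, hval, hP1, hP2]; ring
  have hn0 : (n : ENNReal) ≠ 0 := by
    simp [hn, Fintype.card_ne_zero]
  have hnt : (n : ENNReal) ≠ ⊤ := ENNReal.natCast_ne_top n
  have hcast : ((3 * k : ℕ) : ENNReal) = (n : ENNReal) := by
    have := congrArg (· * (n : ENNReal)) h3P
    simp only [one_mul] at this
    rw [mul_assoc, ENNReal.inv_mul_cancel hn0 hnt, mul_one] at this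
    rw [← this]
    push_cast
    ring
  have hnat : 3 * k = n := by exact_mod_cast hcast
  have hdvd : 3 ∣ 2 ^ N := by
    rw [← show n = 2 ^ N by rw [hn]; simp [Fintype.card_fun]]
    exact ⟨k, hnat.symm⟩
  have := Nat.Prime.dvd_of_dvd_pow Nat.prime_three hdvd
  omega
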